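/- Let D, E be smooth vector fields on an open set X ⊆ ℝ^n, x ∈ X, with local flow φ of D near x, and let Γ(t) = (dφ_t)^{-1}_{φ_t(x)}(E(φ_t(x))). Then for every k ≥ 1, the k-th derivative satisfies Γ^{(k)}(t) = (dφ_t)^{-1}_{φ_t(x)}([D,E]^{(k+1)}(φ_t(x))), where [D,E]^{(2)} = [D,E] and [D,E]^{(k)} = [D,[D,E]^{(k-1)}]. In particular Γ^{(k)}(0) = [D,E]^{(k+1)}(x) with the convention [D,E]^{(1)} := E. -/

import Mathlib

/-- Lie bracket of vector fields on `ℝ^n`. -/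
noncomputable def lieBracketVF {n : ℕ} (D E : (Fin n → ℝ) → (Fin n → ℝ)) :
    (Fin n → ℝ) → (Fin n → ℝ) :=
  fun y => fderiv ℝ E y (D y) - fderiv ℝ D y (E y)

/-- Iterated Lie brackets with the convention `[D,E]⁽¹⁾ := E`,
`[D,E]⁽ᵏ⁺¹⁾ := [D,[D,E]⁽ᵏ⁾]`, so `[D,E]⁽²⁾ = [D,E]`. -/
noncomputable def iterLie {n : ℕ} (D E : (Fin n → ℝ) → (Fin n → ℝ)) :
    ℕ → ((Fin n → ℝ) → (Fin n → ℝ))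
  | 0 => fun _ => 0
  | 1 => E
  | (k + 2) => lieBracketVF D (iterLie D E (k + 1))

open Set Metric Real Filter MeasureTheory intervalIntegral Topology

section
variable {n : ℕ}


private lemma lipOn_neg {n : ℕ} {D : (Fin n → ℝ) → (Fin n → ℝ)} {C : NNReal}
    {s : Set (Fin n → ℝ)} (h : LipschitzOnWith C D s) :
    LipschitzOnWith C (fun y => -D y) s := by
  intro a ha b hb
  simpa [edist_neg_neg] using h ha hb

private lemma flow_tube_fwd {n : ℕ} {D : (Fin n → ℝ) → (Fin n → ℝ)} {C : NNReal}
    {a b r δ : ℝ} {f g : ℝ → (Fin n → ℝ)}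
    (hab : a ≤ b) (hr : 0 < r)
    (hLip : ∀ t ∈ Set.Icc a b, LipschitzOnWith C D (Metric.closedBall (g t) r))
    (hf : ∀ t ∈ Set.Icc a b, HasDerivAt f (D (f t)) t)
    (hg : ∀ t ∈ Set.Icc a b, HasDerivAt g (D (g t)) t)
    (hinit : dist (f a) (g a) ≤ δ) (hδ0 : 0 ≤ δ)
    (hsmall : δ * Real.exp (C * (b - a)) < r) :
    ∀ t ∈ Set.Icc a b, dist (f t) (g t) ≤ δ * Real.exp (C * (t - a)) := by
  have hmono : ∀ u ∈ Set.Icc a b, δ * Real.exp (C * (u - a)) ≤ δ * Real.exp (C * (b - a)) := by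
    intro u hu
    have : (C : ℝ) * (u - a) ≤ (C : ℝ) * (b - a) :=
      mul_le_mul_of_nonneg_left (by linarith [hu.2]) C.coe_nonneg
    exact mul_le_mul_of_nonneg_left (Real.exp_le_exp.2 this) hδ0
  set S : Set ℝ :=
    {t | t ∈ Set.Icc a b ∧ ∀ u ∈ Set.Icc a t, dist (f u) (g u) ≤ δ * Real.exp (C * (u - a))}
    with hS
  have haS : a ∈ S := by
    refine ⟨⟨le_refl a, hab⟩, ?_⟩
    intro u hu
    have : u = a := le_antisymm hu.2 hu.1
    subst this
    simpa using hinit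
  have hbdd : BddAbove S := ⟨b, fun t ht => ht.1.2⟩
  set c := sSup S with hc
  have hac : a ≤ c := le_csSup hbdd haS
  have hcb : c ≤ b := csSup_le ⟨a, haS⟩ fun t ht => ht.1.2
  have hIco : ∀ u ∈ Set.Ico a c, dist (f u) (g u) ≤ δ * Real.exp (C * (u - a)) := by
    intro u hu
    obtain ⟨t, htS, hut⟩ := exists_lt_of_lt_csSup ⟨a, haS⟩ hu.2
    exact htS.2 u ⟨hu.1, hut.le⟩
  have hcont : ∀ u ∈ Set.Icc a b, ContinuousAt (fun w => dist (f w) (g w)) u := by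
    intro u hu
    exact ((hf u hu).continuousAt.dist (hg u hu).continuousAt)
  have hcc : dist (f c) (g c) ≤ δ * Real.exp (C * (c - a)) := by
    rcases eq_or_lt_of_le hac with h' | h'
    · rw [← h']; simpa using hinit
    · have hne : (𝓝[Set.Ico a c] c).NeBot := by
        rw [← mem_closure_iff_nhdsWithin_neBot, closure_Ico h'.ne]
        exact ⟨hac, le_refl c⟩
      have h1 : Filter.Tendsto (fun w => dist (f w) (g w)) (𝓝[Set.Ico a c] c)
          (𝓝 (dist (f c) (g c))) :=
        ((hcont c ⟨hac, hcb⟩).continuousWithinAt).tendsto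
      have h2 : Filter.Tendsto (fun w => δ * Real.exp (C * (w - a))) (𝓝[Set.Ico a c] c)
          (𝓝 (δ * Real.exp (C * (c - a)))) := by
        apply Filter.Tendsto.mono_left _ nhdsWithin_le_nhds
        exact (continuous_const.mul ((Real.continuous_exp.comp
          (continuous_const.mul (continuous_id.sub continuous_const))))).tendsto c
      refine le_of_tendsto_of_tendsto h1 h2 ?_
      filter_upwards [self_mem_nhdsWithin] with w hw
      exact hIco w hw
  have hcS : ∀ u ∈ Set.Icc a c, dist (f u) (g u) ≤ δ * Real.exp (C * (u - a)) := by
    intro u hu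
    rcases eq_or_lt_of_le hu.2 with h | h
    · rw [h]; exact hcc
    · exact hIco u ⟨hu.1, h⟩
  have hceqb : c = b := by
    by_contra hne
    have hclt : c < b := lt_of_le_of_ne hcb hne
    have hdc : dist (f c) (g c) < r :=
      lt_of_le_of_lt (le_trans (hcS c ⟨hac, le_refl c⟩) (hmono c ⟨hac, hcb⟩)) hsmall
    have hev : ∀ᶠ w in 𝓝 c, dist (f w) (g w) < r :=
      (hcont c ⟨hac, hcb⟩).eventually_lt_const hdc
    obtain ⟨η, hη, hball⟩ := Metric.eventually_nhds_iff.1 hev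
    set c' := min b (c + η / 2) with hc'
    have hcc' : c < c' := lt_min hclt (by linarith)
    have hc'b : c' ≤ b := min_le_left _ _
    have hac' : a ≤ c' := le_trans hac hcc'.le
    have hmem : ∀ u ∈ Set.Icc a c', dist (f u) (g u) ≤ r := by
      intro u hu
      rcases le_or_gt u c with h | h
      · exact le_trans (le_trans (hcS u ⟨hu.1, h⟩) (hmono u ⟨hu.1, le_trans h hcb⟩)) hsmall.le
      · refine (hball ?_).le
        have h2 : u ≤ c + η / 2 := le_trans hu.2 (min_le_right _ _)
        rw [Real.dist_eq, abs_lt]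
        constructor <;> linarith
    have hLip' : ∀ t, LipschitzOnWith C ((fun _ => D) t)
        ((fun t => if t ∈ Set.Icc a c' then Metric.closedBall (g t) r
          else (∅ : Set (Fin n → ℝ))) t) := by
      intro t
      by_cases ht : t ∈ Set.Icc a c'
      · simp only [ht, if_true]
        exact hLip t ⟨ht.1, le_trans ht.2 hc'b⟩
      · simp only [ht, if_false]
        exact lipschitzOnWith_empty _ _
    have hfc : ContinuousOn f (Set.Icc a c') := fun u hu =>
      ((hf u ⟨hu.1, le_trans hu.2 hc'b⟩).continuousAt).continuousWithinAt
    have hgc : ContinuousOn g (Set.Icc a c') := fun u hu =>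
      ((hg u ⟨hu.1, le_trans hu.2 hc'b⟩).continuousAt).continuousWithinAt
    have hfd : ∀ u ∈ Set.Ico a c',
        HasDerivWithinAt f ((fun _ => D) u (f u)) (Set.Ici u) u := fun u hu =>
      ((hf u ⟨hu.1, le_trans hu.2.le hc'b⟩).hasDerivWithinAt)
    have hgd : ∀ u ∈ Set.Ico a c',
        HasDerivWithinAt g ((fun _ => D) u (g u)) (Set.Ici u) u := fun u hu =>
      ((hg u ⟨hu.1, le_trans hu.2.le hc'b⟩).hasDerivWithinAt)
    have hfs : ∀ u ∈ Set.Ico a c', f u ∈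
        (fun t => if t ∈ Set.Icc a c' then Metric.closedBall (g t) r
          else (∅ : Set (Fin n → ℝ))) u := by
      intro u hu
      have hu' : u ∈ Set.Icc a c' := ⟨hu.1, hu.2.le⟩
      simp only [hu', if_true]
      exact Metric.mem_closedBall.2 (hmem u hu')
    have hgs : ∀ u ∈ Set.Ico a c', g u ∈
        (fun t => if t ∈ Set.Icc a c' then Metric.closedBall (g t) r
          else (∅ : Set (Fin n → ℝ))) u := by
      intro u hu
      have hu' : u ∈ Set.Icc a c' := ⟨hu.1, hu.2.le⟩
      simp only [hu', if_true]
      exact Metric.mem_closedBall_self hr.le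
    have hgr := dist_le_of_trajectories_ODE_of_mem (fun t _ => hLip' t) hfc hfd hfs hgc hgd hgs hinit
    have : c' ∈ S := ⟨⟨hac', hc'b⟩, hgr⟩
    exact absurd (le_csSup hbdd this) (not_le.2 hcc')
  intro t ht
  exact hcS t ⟨ht.1, hceqb ▸ ht.2⟩

private lemma flow_tube {n : ℕ} {D : (Fin n → ℝ) → (Fin n → ℝ)} {C : NNReal}
    {t₀ ε r δ : ℝ} {f g : ℝ → (Fin n → ℝ)}
    (hε : 0 ≤ ε) (hr : 0 < r)
    (hLip : ∀ t ∈ Set.Icc (t₀ - ε) (t₀ + ε), LipschitzOnWith C D (Metric.closedBall (g t) r))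
    (hf : ∀ t ∈ Set.Icc (t₀ - ε) (t₀ + ε), HasDerivAt f (D (f t)) t)
    (hg : ∀ t ∈ Set.Icc (t₀ - ε) (t₀ + ε), HasDerivAt g (D (g t)) t)
    (hinit : dist (f t₀) (g t₀) ≤ δ) (hδ0 : 0 ≤ δ)
    (hsmall : δ * Real.exp (C * ε) < r) :
    ∀ t ∈ Set.Icc (t₀ - ε) (t₀ + ε), dist (f t) (g t) ≤ δ * Real.exp (C * ε) := by
  have hexp : ∀ u : ℝ, u ≤ ε → δ * Real.exp (C * u) ≤ δ * Real.exp (C * ε) := fun u hu =>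
    mul_le_mul_of_nonneg_left
      (Real.exp_le_exp.2 (mul_le_mul_of_nonneg_left hu C.coe_nonneg)) hδ0
  intro t ht
  rcases le_total t₀ t with hside | hside
  · -- forward
    have hsub : Set.Icc t₀ (t₀ + ε) ⊆ Set.Icc (t₀ - ε) (t₀ + ε) :=
      Set.Icc_subset_Icc (by linarith) (le_refl _)
    have := flow_tube_fwd (le_add_of_nonneg_right hε) hr
      (fun u hu => hLip u (hsub hu)) (fun u hu => hf u (hsub hu)) (fun u hu => hg u (hsub hu))
      hinit hδ0 (by simpa using hsmall) t ⟨hside, ht.2⟩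
    exact le_trans this (hexp _ (by linarith [ht.2]))
  · -- backward: reverse time
    set f2 : ℝ → (Fin n → ℝ) := fun u => f (2 * t₀ - u) with hf2
    set g2 : ℝ → (Fin n → ℝ) := fun u => g (2 * t₀ - u) with hg2
    have hmap : ∀ u ∈ Set.Icc t₀ (t₀ + ε), 2 * t₀ - u ∈ Set.Icc (t₀ - ε) (t₀ + ε) := by
      intro u hu
      constructor <;> [linarith [hu.2]; linarith [hu.1]]
    have hf2' : ∀ u ∈ Set.Icc t₀ (t₀ + ε), HasDerivAt f2 ((fun y => -D y) (f2 u)) u := by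
      intro u hu
      have h1 : HasDerivAt (fun w : ℝ => 2 * t₀ - w) (-1) u := by
        simpa using (hasDerivAt_id u).const_sub (2 * t₀)
      have h2 := (hf (2 * t₀ - u) (hmap u hu)).scomp u h1
      simpa [hf2, neg_one_smul, Function.comp_def] using h2
    have hg2' : ∀ u ∈ Set.Icc t₀ (t₀ + ε), HasDerivAt g2 ((fun y => -D y) (g2 u)) u := by
      intro u hu
      have h1 : HasDerivAt (fun w : ℝ => 2 * t₀ - w) (-1) u := by
        simpa using (hasDerivAt_id u).const_sub (2 * t₀)
      have h2 := (hg (2 * t₀ - u) (hmap u hu)).scomp u h1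
      simpa [hg2, neg_one_smul, Function.comp_def] using h2
    have hLip2 : ∀ u ∈ Set.Icc t₀ (t₀ + ε),
        LipschitzOnWith C (fun y => -D y) (Metric.closedBall (g2 u) r) := fun u hu =>
      lipOn_neg (hLip _ (hmap u hu))
    have hinit2 : dist (f2 t₀) (g2 t₀) ≤ δ := by
      simpa [hf2, hg2, show 2 * t₀ - t₀ = t₀ by ring] using hinit
    have := flow_tube_fwd (le_add_of_nonneg_right hε) hr hLip2 hf2' hg2' hinit2 hδ0
      (by simpa using hsmall) (2 * t₀ - t) ⟨by linarith [ht.1, ht.2], by linarith [ht.1, ht.2]⟩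
    have heq : f2 (2 * t₀ - t) = f t := by show f _ = f t; congr 1; ring
    have heq2 : g2 (2 * t₀ - t) = g t := by show g _ = g t; congr 1; ring
    rw [heq, heq2] at this
    exact le_trans this (hexp _ (by linarith [ht.1]))

private lemma iterLie_smooth {X : Set (Fin n → ℝ)} (hX : IsOpen X)
    {D W : (Fin n → ℝ) → (Fin n → ℝ)} (hD : ContDiffOn ℝ (⊤ : ℕ∞) D X) (hW : ContDiffOn ℝ (⊤ : ℕ∞) W X) :
    ∀ k, ContDiffOn ℝ (⊤ : ℕ∞) (iterLie D W k) X := by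
  have hbr : ∀ G : (Fin n → ℝ) → (Fin n → ℝ), ContDiffOn ℝ (⊤ : ℕ∞) G X →
      ContDiffOn ℝ (⊤ : ℕ∞) (lieBracketVF D G) X := fun G hG =>
    ((hG.fderiv_of_isOpen hX (by simp)).clm_apply hD).sub
      ((hD.fderiv_of_isOpen hX (by simp)).clm_apply hG)
  have main : ∀ k, ContDiffOn ℝ (⊤ : ℕ∞) (iterLie D W k) X ∧
      ContDiffOn ℝ (⊤ : ℕ∞) (iterLie D W (k + 1)) X := by
    intro k
    induction k with
    | zero => exact ⟨contDiffOn_const, hW⟩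
    | succ k ih => exact ⟨ih.2, hbr _ ih.2⟩
  exact fun k => (main k).1

private lemma key {X : Set (Fin n → ℝ)} (hX : IsOpen X)
    {D : (Fin n → ℝ) → (Fin n → ℝ)} (hD : ContDiffOn ℝ (⊤ : ℕ∞) D X)
    {x : Fin n → ℝ}
    {Δ : Set ℝ} (hΔ : IsOpen Δ)
    {V : Set (Fin n → ℝ)} (hV : IsOpen V) (hxV : x ∈ V) (hVX : V ⊆ X)
    {φ : ℝ → (Fin n → ℝ) → (Fin n → ℝ)}
    (hφX : ∀ t ∈ Δ, ∀ v ∈ V, φ t v ∈ X)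
    (hφ : ∀ t ∈ Δ, ∀ v ∈ V, HasDerivAt (fun s => φ s v) (D (φ t v)) t)
    (hφdiff : ∀ t ∈ Δ, ContDiffOn ℝ (⊤ : ℕ∞) (φ t) V)
    {t₀ : ℝ} (ht₀ : t₀ ∈ Δ) :
    HasDerivAt (fun s => fderiv ℝ (φ s) x)
      ((fderiv ℝ D (φ t₀ x)).comp (fderiv ℝ (φ t₀) x)) t₀ := by
  set L : ℝ → (Fin n → ℝ) →L[ℝ] (Fin n → ℝ) := fun s => fderiv ℝ (φ s) x with hLdef
  set B : ℝ → (Fin n → ℝ) →L[ℝ] (Fin n → ℝ) := fun s => fderiv ℝ D (φ s x) with hBdef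
  set g : ℝ → (Fin n → ℝ) := fun s => φ s x with hgdef
  -- basic differentiability facts
  have hDdiff : ∀ y ∈ X, DifferentiableAt ℝ D y := fun y hy =>
    (hD.differentiableOn (by simp)).differentiableAt (hX.mem_nhds hy)
  have hDcont : ∀ y ∈ X, ContinuousAt D y := fun y hy => (hDdiff y hy).continuousAt
  have hL : ∀ s ∈ Δ, HasFDerivAt (φ s) (L s) x := by
    intro s hs
    exact (((hφdiff s hs).differentiableOn (by simp)).differentiableAt
      (hV.mem_nhds hxV)).hasFDerivAt
  -- interval inside Δ
  obtain ⟨ε₀, hε₀pos, hball⟩ := Metric.isOpen_iff.1 hΔ t₀ ht₀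
  set ε₁ : ℝ := ε₀ / 2 with hε₁def
  have hε₁pos : 0 < ε₁ := by positivity
  set I : Set ℝ := Set.Icc (t₀ - ε₁) (t₀ + ε₁) with hIdef
  have hIΔ : I ⊆ Δ := by
    intro s hs
    apply hball
    rw [Metric.mem_ball, Real.dist_eq, abs_lt]
    constructor <;> [linarith [hs.1, hε₁pos]; linarith [hs.2, hε₁pos]]
  have ht₀I : t₀ ∈ I := ⟨by linarith, by linarith⟩
  -- compact tube around the base trajectory
  have gcont : ContinuousOn g I := fun s hs =>
    ((hφ s (hIΔ hs) x hxV).continuousAt).continuousWithinAt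
  have hKcomp : IsCompact (g '' I) := (isCompact_Icc).image_of_continuousOn gcont
  have hKX : g '' I ⊆ X := by
    rintro _ ⟨s, hs, rfl⟩
    exact hφX s (hIΔ hs) x hxV
  obtain ⟨r, hrpos, hrX⟩ := hKcomp.exists_cthickening_subset_open hX hKX
  set Kc : Set (Fin n → ℝ) := Metric.cthickening r (g '' I) with hKcdef
  have hKcX : Kc ⊆ X := hrX
  have hKcc : IsCompact Kc := hKcomp.cthickening
  -- Lipschitz constant of D on balls inside Kc
  have hDf : ContinuousOn (fun y => fderiv ℝ D y) X :=
    hD.continuousOn_fderiv_of_isOpen hX (by simp)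
  obtain ⟨C₁, hC₁⟩ := hKcc.exists_bound_of_continuousOn (hDf.mono hKcX)
  set C : NNReal := Real.toNNReal C₁ with hCdef
  have hC : ∀ y ∈ Kc, ‖fderiv ℝ D y‖ ≤ (C : ℝ) := fun y hy =>
    le_trans (hC₁ y hy) (Real.le_coe_toNNReal C₁)
  have hDlip : ∀ z r', closedBall z r' ⊆ Kc → LipschitzOnWith C D (Metric.closedBall z r') := by
    intro z r' hsub
    apply Convex.lipschitzOnWith_of_nnnorm_fderiv_le
      (fun y hy => hDdiff y (hKcX (hsub hy)))
      (fun y hy => ?_) (convex_closedBall z r')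
    · rw [← NNReal.coe_le_coe, coe_nnnorm]
      exact hC y (hsub hy)
  have hgK : ∀ s ∈ I, g s ∈ g '' I := fun s hs => Set.mem_image_of_mem g hs
  have hLipD : ∀ s ∈ I, LipschitzOnWith C D (Metric.closedBall (g s) r) := fun s hs =>
    hDlip _ _ (Metric.closedBall_subset_cthickening (hgK s hs) r)
  -- choice of δ
  obtain ⟨δ₀, hδ₀pos, hδ₀V⟩ := Metric.nhds_basis_closedBall.mem_iff.1 (hV.mem_nhds hxV)
  set ρ : ℝ := r / 8 * Real.exp (-((C : ℝ) * ε₁)) with hρdef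
  have hρpos : 0 < ρ := by positivity
  have hρexp : ρ * Real.exp ((C : ℝ) * ε₁) = r / 8 := by
    rw [hρdef, mul_assoc, ← Real.exp_add]
    simp
  have hcont0 : ContinuousAt (φ t₀) x :=
    ((hφdiff t₀ ht₀).continuousOn.continuousAt (hV.mem_nhds hxV))
  obtain ⟨δ₁, hδ₁pos, hδ₁⟩ := Metric.continuousAt_iff.1 hcont0 ρ hρpos
  set δ : ℝ := min δ₀ (δ₁ / 2) with hδdef
  have hδpos : 0 < δ := lt_min hδ₀pos (by linarith)
  have hδV : Metric.closedBall x δ ⊆ V := fun y hy =>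
    hδ₀V (Metric.closedBall_subset_closedBall (min_le_left _ _) hy)
  have hinit : ∀ v ∈ Metric.closedBall x δ, dist (φ t₀ v) (g t₀) ≤ ρ := by
    intro v hv
    have : dist v x < δ₁ := lt_of_le_of_lt
      (le_trans (Metric.mem_closedBall.1 hv) (min_le_right _ _)) (by linarith)
    exact (hδ₁ this).le
  -- tube membership
  have hφder : ∀ v ∈ Metric.closedBall x δ, ∀ s ∈ I,
      HasDerivAt (fun u => φ u v) (D (φ s v)) s := fun v hv s hs =>
    hφ s (hIΔ hs) v (hδV hv)
  have hgder : ∀ s ∈ I, HasDerivAt g (D (g s)) s := fun s hs => hφ s (hIΔ hs) x hxV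
  have htube : ∀ v ∈ Metric.closedBall x δ, ∀ s ∈ I, dist (φ s v) (g s) ≤ r / 8 := by
    intro v hv s hs
    have := flow_tube hε₁pos.le hrpos hLipD (hφder v hv) hgder (hinit v hv) hρpos.le
      (by rw [hρexp]; linarith) s hs
    rwa [hρexp] at this
  -- pairwise Grönwall estimate
  have hpair : ∀ v ∈ Metric.closedBall x δ, ∀ w ∈ Metric.closedBall x δ, ∀ s ∈ I,
      dist (φ s v) (φ s w) ≤ dist (φ t₀ v) (φ t₀ w) * Real.exp ((C : ℝ) * ε₁) := by
    intro v hv w hw s hs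
    have hLip2 : ∀ u ∈ I, LipschitzOnWith C D (Metric.closedBall (φ u w) (r / 2)) := by
      intro u hu
      refine (hLipD u hu).mono ?_
      intro y hy
      have h1 : dist y (φ u w) ≤ r / 2 := Metric.mem_closedBall.1 hy
      have h2 : dist (φ u w) (g u) ≤ r / 8 := htube w hw u hu
      exact Metric.mem_closedBall.2 (le_trans (dist_triangle y (φ u w) (g u)) (by linarith))
    have hinit2 : dist (φ t₀ v) (φ t₀ w) ≤ dist (φ t₀ v) (φ t₀ w) := le_refl _
    have hsmall2 : dist (φ t₀ v) (φ t₀ w) * Real.exp ((C : ℝ) * ε₁) < r / 2 := by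
      have h1 : dist (φ t₀ v) (φ t₀ w) ≤ 2 * ρ := by
        have := hinit v hv
        have := hinit w hw
        calc dist (φ t₀ v) (φ t₀ w) ≤ dist (φ t₀ v) (g t₀) + dist (φ t₀ w) (g t₀) :=
          dist_triangle_right _ _ _
        _ ≤ 2 * ρ := by linarith [hinit v hv, hinit w hw]
      calc dist (φ t₀ v) (φ t₀ w) * Real.exp ((C : ℝ) * ε₁)
          ≤ 2 * ρ * Real.exp ((C : ℝ) * ε₁) :=
            mul_le_mul_of_nonneg_right h1 (Real.exp_nonneg _)
        _ = 2 * (r / 8) := by rw [mul_assoc, hρexp]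
        _ < r / 2 := by linarith
    exact flow_tube hε₁pos.le (by linarith : (0:ℝ) < r / 2) hLip2 (hφder v hv)
      (hφder w hw) hinit2 dist_nonneg hsmall2 s hs
  -- Lipschitz constant of φ t₀ on the ball
  have hφt₀fcont : ContinuousOn (fun y => fderiv ℝ (φ t₀) y) V :=
    (hφdiff t₀ ht₀).continuousOn_fderiv_of_isOpen hV (by simp)
  obtain ⟨C₂', hC₂'⟩ := (isCompact_closedBall x δ).exists_bound_of_continuousOn
    (hφt₀fcont.mono hδV)
  set C₂ : NNReal := Real.toNNReal C₂' with hC₂def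
  have hLipφt₀ : LipschitzOnWith C₂ (φ t₀) (Metric.closedBall x δ) := by
    apply Convex.lipschitzOnWith_of_nnnorm_fderiv_le
      (fun y hy => (((hφdiff t₀ ht₀).differentiableOn (by simp)).differentiableAt
        (hV.mem_nhds (hδV hy))))
      (fun y hy => ?_) (convex_closedBall x δ)
    · rw [← NNReal.coe_le_coe, coe_nnnorm]
      exact le_trans (hC₂' y hy) (Real.le_coe_toNNReal C₂')
  set C₄ : NNReal := C₂ * Real.toNNReal (Real.exp ((C : ℝ) * ε₁)) with hC₄def
  have hC₄coe : (C₄ : ℝ) = (C₂ : ℝ) * Real.exp ((C : ℝ) * ε₁) := by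
    rw [hC₄def, NNReal.coe_mul, Real.coe_toNNReal _ (Real.exp_nonneg _)]
  have hLipφs : ∀ s ∈ I, LipschitzOnWith C₄ (φ s) (Metric.closedBall x δ) := by
    intro s hs
    rw [lipschitzOnWith_iff_dist_le_mul]
    intro v hv w hw
    calc dist (φ s v) (φ s w) ≤ dist (φ t₀ v) (φ t₀ w) * Real.exp ((C : ℝ) * ε₁) :=
        hpair v hv w hw s hs
    _ ≤ ((C₂ : ℝ) * dist v w) * Real.exp ((C : ℝ) * ε₁) :=
        mul_le_mul_of_nonneg_right
          ((lipschitzOnWith_iff_dist_le_mul.1 hLipφt₀) v hv w hw) (Real.exp_nonneg _)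
    _ = (C₄ : ℝ) * dist v w := by rw [hC₄coe]; ring
  -- Lipschitz property of v ↦ D (φ s v)
  have hFlip : ∀ s ∈ I, LipschitzOnWith (C * C₄) (fun v => D (φ s v))
      (Metric.closedBall x δ) := by
    intro s hs
    refine LipschitzOnWith.comp (hLipD s hs) (hLipφs s hs) ?_
    intro v hv
    exact Metric.mem_closedBall.2 (le_trans (htube v hv s hs) (by linarith))
  -- operator norm bounds
  have hLbound : ∀ s ∈ I, ‖L s‖ ≤ (C₄ : ℝ) := fun s hs =>
    (hL s (hIΔ hs)).le_of_lipschitzOn (Metric.closedBall_mem_nhds x hδpos) (hLipφs s hs)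
  have hBbound : ∀ s ∈ I, ‖B s‖ ≤ (C : ℝ) := fun s hs =>
    hC (g s) (Metric.self_subset_cthickening _ (hgK s hs))
  have hGbound : ∀ s ∈ I, ‖(B s).comp (L s)‖ ≤ (C : ℝ) * (C₄ : ℝ) := by
    intro s hs
    refine le_trans (ContinuousLinearMap.opNorm_comp_le _ _) ?_
    exact mul_le_mul (hBbound s hs) (hLbound s hs) (norm_nonneg _) C.coe_nonneg
  -- measurability of L on I
  have hImeas : MeasurableSet I := measurableSet_Icc
  have hLmeas : AEStronglyMeasurable L (volume.restrict I) := by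
    have he : ∀ i : Fin n, ‖(Pi.single i (1:ℝ) : Fin n → ℝ)‖ ≤ 1 := by
      intro i
      rw [Pi.norm_single]
      norm_num
    set m : ℕ := ⌈1 / δ⌉₊ with hmdef
    set c : ℕ → ℝ := fun j => (j : ℝ) + (m : ℝ) + 1 with hcdef
    have hcpos : ∀ j, 0 < c j := by
      intro j
      have : (0:ℝ) ≤ (j:ℝ) := Nat.cast_nonneg j
      have : (0:ℝ) ≤ (m:ℝ) := Nat.cast_nonneg m
      simp only [hcdef]
      positivity
    have hcinv : ∀ j, (c j)⁻¹ ≤ δ := by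
      intro j
      rw [inv_le_comm₀ (hcpos j) hδpos]
      calc δ⁻¹ = 1 / δ := (one_div δ).symm
      _ ≤ (m : ℝ) := Nat.le_ceil _
      _ ≤ c j := by
          simp only [hcdef]
          linarith [Nat.cast_nonneg (α := ℝ) j]
    set vv : Fin n → ℕ → (Fin n → ℝ) :=
      fun i j => x + (c j)⁻¹ • (Pi.single i (1:ℝ) : Fin n → ℝ) with hvvdef
    have hvmem : ∀ i j, vv i j ∈ Metric.closedBall x δ := by
      intro i j
      rw [Metric.mem_closedBall, dist_eq_norm]
      have h1 : vv i j - x = (c j)⁻¹ • (Pi.single i (1:ℝ) : Fin n → ℝ) := by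
        simp [hvvdef]
      rw [h1, norm_smul, Real.norm_eq_abs, abs_of_nonneg (inv_nonneg.2 (hcpos j).le)]
      calc (c j)⁻¹ * ‖(Pi.single i (1:ℝ) : Fin n → ℝ)‖ ≤ (c j)⁻¹ * 1 :=
          mul_le_mul_of_nonneg_left (he i) (inv_nonneg.2 (hcpos j).le)
      _ = (c j)⁻¹ := mul_one _
      _ ≤ δ := hcinv j
    have hctend : Tendsto (fun j => ‖c j‖) atTop atTop := by
      have h1 : Tendsto c atTop atTop := by
        apply tendsto_atTop_add_const_right
        apply tendsto_atTop_add_const_right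
        exact tendsto_natCast_atTop_atTop
      exact h1.congr fun j => (Real.norm_of_nonneg (hcpos j).le).symm
    have hmeas_i : ∀ i : Fin n, AEStronglyMeasurable
        (fun s => L s (Pi.single i (1:ℝ) : Fin n → ℝ)) (volume.restrict I) := by
      intro i
      apply aestronglyMeasurable_of_tendsto_ae atTop
        (f := fun j => fun s => c j • (φ s (vv i j) - φ s x))
      · intro j
        apply ContinuousOn.aestronglyMeasurable _ hImeas
        intro s hs
        exact (((hφ s (hIΔ hs) (vv i j) (hδV (hvmem i j))).continuousAt.sub
          (hφ s (hIΔ hs) x hxV).continuousAt).const_smul (c j)).continuousWithinAt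
      · rw [ae_restrict_iff' hImeas]
        refine ae_of_all _ fun s hs => ?_
        exact (hL s (hIΔ hs)).lim (Pi.single i (1:ℝ)) hctend
    have hdecomp : ∀ T : (Fin n → ℝ) →L[ℝ] (Fin n → ℝ),
        T = ∑ i : Fin n, (ContinuousLinearMap.smulRightL ℝ (Fin n → ℝ) (Fin n → ℝ)
          (ContinuousLinearMap.proj i)) (T (Pi.single i (1:ℝ) : Fin n → ℝ)) := by
      intro T
      refine ContinuousLinearMap.ext fun w => ?_
      set fum : Fin n → (Fin n → ℝ) := fun i => w i • (Pi.single i (1:ℝ) : Fin n → ℝ) with hfum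
      have hw : w = ∑ i : Fin n, fum i := by
        ext k
        rw [Finset.sum_apply]
        simp [hfum, Pi.single_apply]
      have h2 : T w = ∑ i : Fin n, T (fum i) := by
        conv_lhs => rw [hw]
        exact map_sum T fum Finset.univ
      rw [h2]
      rw [ContinuousLinearMap.sum_apply]
      apply Finset.sum_congr rfl
      intro i _
      rw [hfum]
      rw [_root_.map_smul]
      rfl
    have hsum : AEStronglyMeasurable (fun s => ∑ i : Fin n,
        (ContinuousLinearMap.smulRightL ℝ (Fin n → ℝ) (Fin n → ℝ)
          (ContinuousLinearMap.proj i)) (L s (Pi.single i (1:ℝ) : Fin n → ℝ)))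
        (volume.restrict I) := by
      apply Finset.aestronglyMeasurable_fun_sum
      intro i _
      exact (ContinuousLinearMap.continuous _).comp_aestronglyMeasurable (hmeas_i i)
    exact hsum.congr (ae_of_all _ fun s => (hdecomp (L s)).symm)
  -- continuity and measurability of B and G
  have hBcont : ContinuousOn B I :=
    hDf.comp gcont fun s hs => hKX (hgK s hs)
  have hBmeas : AEStronglyMeasurable B (volume.restrict I) :=
    hBcont.aestronglyMeasurable hImeas
  set G : ℝ → (Fin n → ℝ) →L[ℝ] (Fin n → ℝ) := fun s => (B s).comp (L s) with hGdef
  have hcomp_cont : Continuous fun p : ((Fin n → ℝ) →L[ℝ] (Fin n → ℝ)) ×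
      ((Fin n → ℝ) →L[ℝ] (Fin n → ℝ)) => p.1.comp p.2 :=
    isBoundedBilinearMap_comp.continuous
  have hGmeas : AEStronglyMeasurable G (volume.restrict I) :=
    hcomp_cont.comp_aestronglyMeasurable (hBmeas.prodMk hLmeas)
  have huIcc : ∀ t ∈ I, Set.uIcc t₀ t ⊆ I := fun t ht =>
    (Set.ordConnected_Icc).uIcc_subset ht₀I ht
  have huIoc : ∀ t1 ∈ I, ∀ t2 ∈ I, Set.uIoc t1 t2 ⊆ I := by
    intro t1 h1 t2 h2
    exact le_trans Set.uIoc_subset_uIcc ((Set.ordConnected_Icc).uIcc_subset h1 h2)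
  -- the integral identity
  have hstar : ∀ t ∈ I, L t = L t₀ + ∫ s in t₀..t, G s := by
    intro t ht
    have hsub := huIcc t ht
    have hsub' : Set.uIoc t₀ t ⊆ I := huIoc t₀ ht₀I t ht
    have hcontD : ∀ v ∈ Metric.closedBall x δ,
        ContinuousOn (fun s => D (φ s v)) (Set.uIcc t₀ t) := by
      intro v hv s hs
      have h1 : ContinuousAt (fun u => φ u v) s := (hφ s (hIΔ (hsub hs)) v (hδV hv)).continuousAt
      have h2 : ContinuousAt D (φ s v) := hDcont _ (hφX s (hIΔ (hsub hs)) v (hδV hv))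
      have h3 : ContinuousAt (fun u => D (φ u v)) s :=
        ContinuousAt.comp (f := fun u => φ u v) (g := D) (x := s) h2 h1
      exact h3.continuousWithinAt
    have hFTC : ∀ v ∈ Metric.closedBall x δ,
        (∫ s in t₀..t, D (φ s v)) = φ t v - φ t₀ v := by
      intro v hv
      apply intervalIntegral.integral_eq_sub_of_hasDerivAt
      · intro u hu
        exact hφ u (hIΔ (hsub hu)) v (hδV hv)
      · exact (hcontD v hv).intervalIntegrable
    have hpara := intervalIntegral.hasFDerivAt_integral_of_dominated_loc_of_lip
      (F := fun v s => D (φ s v)) (F' := G) (x₀ := x) (a := t₀) (b := t)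
      (bound := fun _ => ((C * C₄ : NNReal) : ℝ)) (μ := volume) (s := Metric.ball x δ)
      (Metric.ball_mem_nhds x hδpos) ?_ ?_ ?_ ?_ ?_ ?_
    · have hX1 : HasFDerivAt (fun v => φ t v - φ t₀ v) (∫ s in t₀..t, G s) x := by
        refine (hpara.2).congr_of_eventuallyEq ?_
        filter_upwards [Metric.closedBall_mem_nhds x hδpos] with v hv
        exact (hFTC v hv).symm
      have hX2 : HasFDerivAt (fun v => φ t v - φ t₀ v) (L t - L t₀) x :=
        (hL t (hIΔ ht)).sub (hL t₀ ht₀)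
      have hor := hX2.unique hX1
      rw [← hor]
      abel
    · filter_upwards [Metric.closedBall_mem_nhds x hδpos] with v hv
      exact ((hcontD v hv).mono Set.uIoc_subset_uIcc).aestronglyMeasurable measurableSet_uIoc
    · exact (hcontD x (Metric.mem_closedBall_self hδpos.le)).intervalIntegrable
    · exact hGmeas.mono_measure (Measure.restrict_mono hsub' le_rfl)
    · refine ae_of_all _ fun s hs => ?_
      have h1 : LipschitzOnWith (C * C₄) (fun v => D (φ s v)) (Metric.ball x δ) :=
        (hFlip s (hsub' hs)).mono Metric.ball_subset_closedBall
      simp only [Real.nnabs_coe]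
      exact h1
    · exact intervalIntegrable_const
    · refine ae_of_all _ fun s hs => ?_
      have hs' : s ∈ I := hsub' hs
      exact ((hDdiff _ (hφX s (hIΔ hs') x hxV)).hasFDerivAt).comp x (hL s (hIΔ hs'))
  -- interval integrability of G
  have hGint : ∀ t1 ∈ I, ∀ t2 ∈ I, IntervalIntegrable G volume t1 t2 := by
    intro t1 h1 t2 h2
    rw [intervalIntegrable_iff]
    refine ⟨hGmeas.mono_measure (Measure.restrict_mono (huIoc t1 h1 t2 h2) le_rfl), ?_⟩
    apply HasFiniteIntegral.restrict_of_bounded ((C : ℝ) * (C₄ : ℝ))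
      measure_Ioc_lt_top
    rw [ae_restrict_iff' measurableSet_Ioc]
    exact ae_of_all _ fun s hs => hGbound s (huIoc t1 h1 t2 h2 hs)
  -- Lipschitz continuity of L on I
  have hLlip : LipschitzOnWith (C * C₄) L I := by
    rw [lipschitzOnWith_iff_dist_le_mul]
    intro t1 h1 t2 h2
    rw [dist_eq_norm]
    have hdiffL : L t1 - L t2 = ∫ s in t2..t1, G s := by
      rw [hstar t1 h1, hstar t2 h2]
      rw [add_sub_add_left_eq_sub]
      exact intervalIntegral.integral_interval_sub_left
        (hGint t₀ ht₀I t1 h1) (hGint t₀ ht₀I t2 h2)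
    rw [hdiffL]
    calc ‖∫ s in t2..t1, G s‖ ≤ (C : ℝ) * (C₄ : ℝ) * |t1 - t2| :=
        intervalIntegral.norm_integral_le_of_norm_le_const
          (fun s hs => hGbound s (huIoc t2 h2 t1 h1 hs))
    _ = ((C * C₄ : NNReal) : ℝ) * dist t1 t2 := by
        rw [Real.dist_eq]
        push_cast
        ring
  -- conclusion via FTC
  have hmemI : I ∈ 𝓝 t₀ := Icc_mem_nhds (by linarith) (by linarith)
  have hLca : ContinuousAt L t₀ := hLlip.continuousOn.continuousAt hmemI
  have hBca : ContinuousAt B t₀ :=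
    ContinuousAt.comp (f := fun s => φ s x) (g := fun y => fderiv ℝ D y) (x := t₀)
      (hDf.continuousAt (hX.mem_nhds (hφX t₀ ht₀ x hxV))) (hφ t₀ ht₀ x hxV).continuousAt
  have hGca : ContinuousAt G t₀ := hcomp_cont.continuousAt.comp (hBca.prodMk hLca)
  have hsmf : StronglyMeasurableAtFilter G (𝓝 t₀) := ⟨I, hmemI, hGmeas⟩
  have hPder : HasDerivAt (fun u => ∫ s in t₀..u, G s) (G t₀) t₀ :=
    intervalIntegral.integral_hasDerivAt_right (hGint t₀ ht₀I t₀ ht₀I) hsmf hGca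
  have hfinal : HasDerivAt L (G t₀) t₀ := by
    refine HasDerivAt.congr_of_eventuallyEq (hPder.const_add (L t₀)) ?_
    filter_upwards [hmemI] with u hu
    exact hstar u hu
  exact hfinal


end


set_option maxHeartbeats 1000000
set_option synthInstance.maxHeartbeats 1000000

/-- Higher derivatives of the pullback `Γ(t) = (dφ_t)⁻¹(W(φ_t(x)))` of a vector field
along the flow of `D` are given by iterated Lie brackets:
`Γ⁽ᵏ⁾(t) = (dφ_t)⁻¹([D,W]⁽ᵏ⁺¹⁾(φ_t(x)))`; in particular `Γ⁽ᵏ⁾(0) = [D,W]⁽ᵏ⁺¹⁾(x)`. -/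
theorem stmt8 {n : ℕ} (X : Set (Fin n → ℝ)) (hX : IsOpen X)
    (D W : (Fin n → ℝ) → (Fin n → ℝ))
    (hD : ContDiffOn ℝ (⊤ : ℕ∞) D X) (hW : ContDiffOn ℝ (⊤ : ℕ∞) W X)
    (x : Fin n → ℝ) (hx : x ∈ X)
    (Δ : Set ℝ) (hΔ : IsOpen Δ) (h0Δ : (0 : ℝ) ∈ Δ)
    (V : Set (Fin n → ℝ)) (hV : IsOpen V) (hxV : x ∈ V) (hVX : V ⊆ X)
    (φ : ℝ → (Fin n → ℝ) → (Fin n → ℝ))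
    (hφ0 : ∀ v ∈ V, φ 0 v = v)
    (hφX : ∀ t ∈ Δ, ∀ v ∈ V, φ t v ∈ X)
    (hφ : ∀ t ∈ Δ, ∀ v ∈ V, HasDerivAt (fun s => φ s v) (D (φ t v)) t)
    (hφdiff : ∀ t ∈ Δ, ContDiffOn ℝ (⊤ : ℕ∞) (φ t) V)
    (A : ℝ → ((Fin n → ℝ) ≃L[ℝ] (Fin n → ℝ)))
    (hA : ∀ t ∈ Δ, ∀ v : Fin n → ℝ, A t (fderiv ℝ (φ t) x v) = v) :
    ∀ k ≥ 1,
      (∀ t ∈ Δ, iteratedDeriv k (fun s => A s (W (φ s x))) t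
          = A t (iterLie D W (k + 1) (φ t x))) ∧
      iteratedDeriv k (fun s => A s (W (φ s x))) 0 = iterLie D W (k + 1) x := by
  set L : ℝ → (Fin n → ℝ) →L[ℝ] (Fin n → ℝ) := fun s => fderiv ℝ (φ s) x with hLdef
  set B : ℝ → (Fin n → ℝ) →L[ℝ] (Fin n → ℝ) := fun s => fderiv ℝ D (φ s x) with hBdef
  -- L t is the inverse of A t
  have hLA : ∀ t ∈ Δ, L t = ((A t).symm : (Fin n → ℝ) →L[ℝ] (Fin n → ℝ)) := by
    intro t ht
    refine ContinuousLinearMap.ext fun v => ?_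
    apply (A t).injective
    rw [hA t ht v]
    simp
  have hmul1 : ∀ t ∈ Δ, (L t) * ((A t : (Fin n → ℝ) →L[ℝ] (Fin n → ℝ))) = 1 := by
    intro t ht
    rw [hLA t ht]
    ext1 v
    simp [ContinuousLinearMap.mul_apply]
  have hmul2 : ∀ t ∈ Δ, ((A t : (Fin n → ℝ) →L[ℝ] (Fin n → ℝ))) * (L t) = 1 := by
    intro t ht
    rw [hLA t ht]
    ext1 v
    simp [ContinuousLinearMap.mul_apply]
  have hRinv : ∀ t ∈ Δ,
      Ring.inverse (L t) = ((A t : (Fin n → ℝ) →L[ℝ] (Fin n → ℝ))) := by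
    intro t ht
    have := Ring.inverse_unit
      (⟨L t, (A t : (Fin n → ℝ) →L[ℝ] (Fin n → ℝ)), hmul1 t ht, hmul2 t ht⟩ :
        ((Fin n → ℝ) →L[ℝ] (Fin n → ℝ))ˣ)
    simpa using this
  -- derivative of the inverse family
  have hLder : ∀ t ∈ Δ, HasDerivAt L ((B t).comp (L t)) t := fun t ht =>
    key hX hD hΔ hV hxV hVX hφX hφ hφdiff ht
  have hAderiv : ∀ t ∈ Δ, HasDerivAt (fun s => ((A s : (Fin n → ℝ) →L[ℝ] (Fin n → ℝ))))
      (-(((A t : (Fin n → ℝ) →L[ℝ] (Fin n → ℝ))).comp (B t))) t := by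
    intro t ht
    set u : ((Fin n → ℝ) →L[ℝ] (Fin n → ℝ))ˣ :=
      ⟨L t, (A t : (Fin n → ℝ) →L[ℝ] (Fin n → ℝ)), hmul1 t ht, hmul2 t ht⟩ with hudef
    have h1 : HasFDerivAt (Ring.inverse : ((Fin n → ℝ) →L[ℝ] (Fin n → ℝ)) → _)
        (-(ContinuousLinearMap.mulLeftRight ℝ _ (↑u⁻¹) (↑u⁻¹))) (L t) :=
      hasFDerivAt_ringInverse u
    have h2 : HasDerivAt (fun s => Ring.inverse (L s))
        ((-(ContinuousLinearMap.mulLeftRight ℝ _ (↑u⁻¹) (↑u⁻¹))) ((B t).comp (L t))) t :=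
      h1.comp_hasDerivAt t (hLder t ht)
    have hval : (-(ContinuousLinearMap.mulLeftRight ℝ _ (↑u⁻¹ :
        (Fin n → ℝ) →L[ℝ] (Fin n → ℝ)) (↑u⁻¹))) ((B t).comp (L t))
        = -(((A t : (Fin n → ℝ) →L[ℝ] (Fin n → ℝ))).comp (B t)) := by
      have hinv : ((u⁻¹ : _ˣ) : (Fin n → ℝ) →L[ℝ] (Fin n → ℝ))
          = (A t : (Fin n → ℝ) →L[ℝ] (Fin n → ℝ)) := rfl
      rw [ContinuousLinearMap.neg_apply, ContinuousLinearMap.mulLeftRight_apply, hinv]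
      have : (A t : (Fin n → ℝ) →L[ℝ] (Fin n → ℝ)) * ((B t).comp (L t)) *
          (A t : (Fin n → ℝ) →L[ℝ] (Fin n → ℝ))
          = (A t : (Fin n → ℝ) →L[ℝ] (Fin n → ℝ)) * (B t) := by
        have hc : (B t).comp (L t) = B t * L t := rfl
        rw [hc, mul_assoc, mul_assoc, hmul1 t ht, mul_one]
      rw [this]
      rfl
    rw [hval] at h2
    refine h2.congr_of_eventuallyEq ?_
    filter_upwards [hΔ.mem_nhds ht] with s hs
    exact (hRinv s hs).symm
  -- derivative of the pulled-back vector field, for any smooth field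
  have hstep : ∀ (E : (Fin n → ℝ) → (Fin n → ℝ)), ContDiffOn ℝ (⊤ : ℕ∞) E X → ∀ t ∈ Δ,
      HasDerivAt (fun s => ((A s : (Fin n → ℝ) →L[ℝ] (Fin n → ℝ))) (E (φ s x)))
        (((A t : (Fin n → ℝ) →L[ℝ] (Fin n → ℝ))) (lieBracketVF D E (φ t x))) t := by
    intro E hE t ht
    have hEdiff : DifferentiableAt ℝ E (φ t x) :=
      (hE.differentiableOn (by simp)).differentiableAt (hX.mem_nhds (hφX t ht x hxV))
    have hφc : HasDerivAt (fun s => φ s x) (D (φ t x)) t := hφ t ht x hxV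
    have hcomp : HasDerivAt (fun s => E (φ s x)) (fderiv ℝ E (φ t x) (D (φ t x))) t :=
      hEdiff.hasFDerivAt.comp_hasDerivAt t hφc
    have hmain := (hAderiv t ht).clm_apply hcomp
    refine hmain.congr_deriv ?_
    simp only [lieBracketVF, map_sub, ContinuousLinearMap.neg_apply,
      ContinuousLinearMap.comp_apply]
    abel
  -- the function coincides with the CLM version
  have hfun : (fun s => A s (W (φ s x)))
      = fun s => ((A s : (Fin n → ℝ) →L[ℝ] (Fin n → ℝ))) (W (φ s x)) := by
    funext s
    simp
  have hsm := iterLie_smooth hX hD hW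
  -- main induction
  have main : ∀ k, ∀ t ∈ Δ, iteratedDeriv k (fun s => A s (W (φ s x))) t
      = ((A t : (Fin n → ℝ) →L[ℝ] (Fin n → ℝ))) (iterLie D W (k + 1) (φ t x)) := by
    intro k
    induction k with
    | zero =>
      intro t ht
      rw [iteratedDeriv_zero]
      rfl
    | succ k ih =>
      intro t ht
      rw [iteratedDeriv_succ]
      have hev : iteratedDeriv k (fun s => A s (W (φ s x))) =ᶠ[𝓝 t]
          (fun s => ((A s : (Fin n → ℝ) →L[ℝ] (Fin n → ℝ))) (iterLie D W (k + 1) (φ s x))) := by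
        filter_upwards [hΔ.mem_nhds ht] with u hu
        exact ih u hu
      rw [hev.deriv_eq, (hstep (iterLie D W (k + 1)) (hsm (k + 1)) t ht).deriv]
      rfl
  intro k hk
  constructor
  · intro t ht
    rw [main k t ht]
    simp
  · have h0 := main k 0 h0Δ
    rw [h0]
    have hL0 : fderiv ℝ (φ 0) x = ContinuousLinearMap.id ℝ (Fin n → ℝ) := by
      have hev : φ 0 =ᶠ[𝓝 x] id := eventually_of_mem (hV.mem_nhds hxV) fun v hv => hφ0 v hv
      rw [hev.fderiv_eq, fderiv_id]
    have hA0 : ∀ v : Fin n → ℝ, A 0 v = v := by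
      intro v
      have h := hA 0 h0Δ v
      rwa [hL0, ContinuousLinearMap.id_apply] at h
    rw [hφ0 x hxV]
    simp [hA0]
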